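/- For natural numbers p, q with 1 < p ≤ q, the onion graph On(⌊(q-p)/2⌋, 2p-3, ⌈(q-p)/2⌉) is bipartite and unicyclic, with parts of sizes p and q. -/

import Mathlib

/-- The Wiener index of a graph: the sum of distances over all unordered pairs of vertices. -/
noncomputable def wienerIndex {V : Type*} [Fintype V] (G : SimpleGraph V) : ℕ :=
  (∑ u : V, ∑ v : V, G.dist u v) / 2

/-- The transmission of a vertex: the sum of distances from it to all other vertices. -/
noncomputable def transmission {V : Type*} [Fintype V] (G : SimpleGraph V) (x : V) : ℕ :=
  ∑ u : V, G.dist x u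

/-- The onion graph `On(k,l,m)`: a 4-cycle with antipodal vertices `u, v`,
`k` pendant edges attached at `v`, a path on `l` vertices one of whose endpoints
is identified with `u`, and `m` pendant edges attached to the other endpoint of
the path.  Vertices: `Sum.inl 0 = v`, `Sum.inl 1, Sum.inl 2` the two other cycle
vertices, `Sum.inr (Sum.inl i)` the path vertices (with `u` the path vertex `0`
and `u_l` the path vertex `l-1`), `Sum.inr (Sum.inr (Sum.inl _))` the `k`
pendants at `v`, and `Sum.inr (Sum.inr (Sum.inr _))` the `m` pendants at `u_l`. -/
def onionGraph (k l m : ℕ) : SimpleGraph (Fin 3 ⊕ Fin l ⊕ Fin k ⊕ Fin m) :=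
  SimpleGraph.fromRel (fun a b =>
    match a, b with
    | Sum.inl i, Sum.inl j => i = 0 ∧ j ≠ 0
    | Sum.inl i, Sum.inr (Sum.inl p) => i ≠ 0 ∧ (p : ℕ) = 0
    | Sum.inl i, Sum.inr (Sum.inr (Sum.inl _)) => i = 0
    | Sum.inr (Sum.inl p), Sum.inr (Sum.inl q) => (p : ℕ) + 1 = (q : ℕ)
    | Sum.inr (Sum.inl p), Sum.inr (Sum.inr (Sum.inr _)) => (p : ℕ) = l - 1
    | _, _ => False)

/-- `G` is bipartite with parts of sizes `p` and `q`: there is a set of vertices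
of size `p`, with complement of size `q`, such that every edge goes between the
set and its complement. -/
def hasBipartition {V : Type*} [Fintype V] [DecidableEq V]
    (G : SimpleGraph V) (p q : ℕ) : Prop :=
  ∃ s : Finset V, (∀ a b, G.Adj a b → (a ∈ s ↔ b ∉ s)) ∧ s.card = p ∧ sᶜ.card = q

/-- `G` is unicyclic: connected and containing exactly one cycle; equivalently
(for a finite graph), connected with exactly as many edges as vertices. -/
def IsUnicyclic {V : Type*} [Fintype V] (G : SimpleGraph V) : Prop :=
  G.Connected ∧ Nat.card G.edgeSet = Fintype.card V

/-!
Colour the vertex `v` and the even-indexed vertices of the path black and everything else white.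
Since the path has an odd number `2p - 3` of vertices, its last vertex is black too, so every
edge, including the pendant ones, joins the two colours, and there are `1 + (p - 1) = p` black
vertices.

For unicyclicity, root the graph at `v`: every other vertex has a parent one step closer to `v`
(the path runs back to `u` and then through `Sum.inl 1` to `v`), which gives a spanning tree with
`|V| - 1` edges. The only other edge is the cycle edge between `Sum.inl 2` and `u`, so the graph
is connected with `|V|` edges.
-/

open Finset

lemma card_filter_range_mod_two_eq_zero (l : ℕ) : #{i ∈ range l | i % 2 = 0} = (l + 1) / 2 := by
  induction l with
  | zero => rfl
  | succ l ih =>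
    rw [range_add_one, filter_insert]
    split_ifs with h
    · rw [card_insert_of_notMem (by simp), ih]
      omega
    · rw [ih]
      omega

section Bipartition

variable {V : Type*} [Fintype V] [DecidableEq V] {G : SimpleGraph V}

lemma hasBipartition_of_adj_ne (c : V → Bool) (hc : ∀ a b, G.Adj a b → c a ≠ c b) {p q : ℕ}
    (hp : #{x | c x} = p) (hpq : p + q = Fintype.card V) : hasBipartition G p q := by
  refine ⟨({x | c x} : Finset V), fun a b hab => ?_, hp, ?_⟩
  · have := hc a b hab
    cases ha : c a <;> cases hb : c b <;> simp_all
  · rw [card_compl, hp]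
    omega

end Bipartition

/-- A spanning tree of `G` rooted at `r`, given by parent pointers; `depth` witnesses that
following parents always reaches the root. -/
structure ParentMap {V : Type*} (G : SimpleGraph V) (r : V) where
  parent : V → V
  depth : V → ℕ
  adj_parent : ∀ x, x ≠ r → G.Adj x (parent x)
  depth_parent_lt : ∀ x, x ≠ r → depth (parent x) < depth x

namespace ParentMap

variable {V : Type*} {G : SimpleGraph V} {r : V}

lemma reachable (T : ParentMap G r) (x : V) : G.Reachable r x := by
  induction h : T.depth x using Nat.strong_induction_on generalizing x with
  | _ d ih =>
    by_cases hx : x = r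
    · exact hx ▸ .rfl
    · exact (ih _ (h ▸ T.depth_parent_lt x hx) _ rfl).trans (T.adj_parent x hx).symm.reachable

lemma connected (T : ParentMap G r) : G.Connected :=
  (SimpleGraph.connected_iff G).2 ⟨fun x y => (T.reachable x).symm.trans (T.reachable y), ⟨r⟩⟩

lemma injOn_parentEdge (T : ParentMap G r) : Set.InjOn (fun x => s(x, T.parent x)) {r}ᶜ := by
  intro x hx y hy hxy
  rcases Sym2.eq_iff.1 hxy with ⟨h, -⟩ | ⟨hxy, hyx⟩
  · exact h
  · have hx' := T.depth_parent_lt x hx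
    have hy' := T.depth_parent_lt y hy
    rw [hyx] at hx'
    rw [← hxy] at hy'
    omega

/-- The tree edges `s(x, parent x)` are indexed by the non-root vertices, and `s(a, b)` is the
one edge left over. -/
lemma card_edgeSet [Finite V] (T : ParentMap G r) {a b : V} (hab : G.Adj a b)
    (ha : T.parent a ≠ b) (hb : T.parent b ≠ a)
    (hcover : ∀ x y, G.Adj x y →
      s(x, y) = s(a, b) ∨ (x ≠ r ∧ y = T.parent x) ∨ (y ≠ r ∧ x = T.parent y)) :
    Nat.card G.edgeSet = Nat.card V := by
  have hedges : G.edgeSet = insert s(a, b) ((fun x => s(x, T.parent x)) '' {r}ᶜ) := by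
    ext e
    induction e with
    | _ x y =>
      simp only [SimpleGraph.mem_edgeSet, Set.mem_insert_iff, Set.mem_image,
        Set.mem_compl_singleton_iff]
      constructor
      · intro hxy
        rcases hcover x y hxy with h | ⟨hx, rfl⟩ | ⟨hy, rfl⟩
        · exact .inl h
        · exact .inr ⟨x, hx, rfl⟩
        · exact .inr ⟨y, hy, Sym2.eq_swap⟩
      · rintro (h | ⟨z, hz, h⟩)
        · rwa [← SimpleGraph.mem_edgeSet, h]
        · rw [← SimpleGraph.mem_edgeSet, ← h]
          exact T.adj_parent z hz
  have hnew : s(a, b) ∉ (fun x => s(x, T.parent x)) '' {r}ᶜ := by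
    rintro ⟨z, -, hz⟩
    rcases Sym2.eq_iff.1 hz with ⟨rfl, h⟩ | ⟨rfl, h⟩
    exacts [ha h, hb h]
  rw [Nat.card_coe_set_eq, hedges, Set.ncard_insert_of_notMem hnew,
    T.injOn_parentEdge.ncard_image, ← Set.ncard_compl_add_ncard {r}, Set.ncard_singleton]

lemma isUnicyclic [Fintype V] (T : ParentMap G r) {a b : V} (hab : G.Adj a b)
    (ha : T.parent a ≠ b) (hb : T.parent b ≠ a)
    (hcover : ∀ x y, G.Adj x y →
      s(x, y) = s(a, b) ∨ (x ≠ r ∧ y = T.parent x) ∨ (y ≠ r ∧ x = T.parent y)) :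
    IsUnicyclic G :=
  ⟨T.connected, (T.card_edgeSet hab ha hb hcover).trans Nat.card_eq_fintype_card⟩

end ParentMap

section Onion

variable {k l m n : ℕ}

def onionSide : Fin 3 ⊕ Fin l ⊕ Fin k ⊕ Fin m → Bool
  | .inl i => i = 0
  | .inr (.inl p) => (p : ℕ) % 2 = 0
  | .inr (.inr _) => false

lemma onionSide_ne_of_adj (hl : l % 2 = 1) (a b : Fin 3 ⊕ Fin l ⊕ Fin k ⊕ Fin m)
    (h : (onionGraph k l m).Adj a b) : onionSide a ≠ onionSide b := by
  rcases a with i | p | j | j <;> rcases b with i' | p' | j' | j' <;>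
    simp_all [onionGraph, SimpleGraph.fromRel_adj, onionSide] <;> omega

lemma card_onionSide : #{x : Fin 3 ⊕ Fin l ⊕ Fin k ⊕ Fin m | onionSide x} = 1 + (l + 1) / 2 := by
  rw [card_filter, Fintype.sum_sum_type, Fintype.sum_sum_type, Fintype.sum_sum_type]
  simp [onionSide, Fin.sum_univ_eq_sum_range (fun i => if i % 2 = 0 then 1 else 0),
    card_filter_range_mod_two_eq_zero]

def onionParent : Fin 3 ⊕ Fin (n + 1) ⊕ Fin k ⊕ Fin m → Fin 3 ⊕ Fin (n + 1) ⊕ Fin k ⊕ Fin m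
  | .inl _ => .inl 0
  | .inr (.inl ⟨0, _⟩) => .inl 1
  | .inr (.inl ⟨i + 1, hi⟩) => .inr (.inl ⟨i, by omega⟩)
  | .inr (.inr (.inl _)) => .inl 0
  | .inr (.inr (.inr _)) => .inr (.inl ⟨n, by omega⟩)

def onionDepth : Fin 3 ⊕ Fin (n + 1) ⊕ Fin k ⊕ Fin m → ℕ
  | .inl i => if i = 0 then 0 else 1
  | .inr (.inl p) => p + 2
  | .inr (.inr (.inl _)) => 1
  | .inr (.inr (.inr _)) => n + 3

def onionParentMap : ParentMap (onionGraph k (n + 1) m) (.inl 0) where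
  parent := onionParent
  depth := onionDepth
  adj_parent := by
    rintro (i | ⟨_ | i, hi⟩ | j | j) hx
    · fin_cases i <;> simp_all [onionGraph, SimpleGraph.fromRel_adj, onionParent]
    all_goals simp [onionGraph, SimpleGraph.fromRel_adj, onionParent]
  depth_parent_lt := by
    rintro (i | ⟨_ | i, hi⟩ | j | j) hx
    · fin_cases i <;> simp_all [onionParent, onionDepth]
    all_goals simp [onionParent, onionDepth]

lemma onionGraph_adj_parent_or_eq (x y : Fin 3 ⊕ Fin (n + 1) ⊕ Fin k ⊕ Fin m)
    (h : (onionGraph k (n + 1) m).Adj x y) :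
    s(x, y) = s(.inl 2, .inr (.inl ⟨0, n.succ_pos⟩)) ∨ (x ≠ .inl 0 ∧ y = onionParent x) ∨
      (y ≠ .inl 0 ∧ x = onionParent y) := by
  rcases x with i | ⟨_ | a, ha⟩ | j | j <;> rcases y with i' | ⟨_ | b, hb⟩ | j' | j' <;>
    (try fin_cases i) <;> (try fin_cases i') <;>
    simp_all [onionGraph, SimpleGraph.fromRel_adj, onionParent]
  omega

lemma onionGraph_succ_isUnicyclic : IsUnicyclic (onionGraph k (n + 1) m) :=
  onionParentMap.isUnicyclic (a := .inl 2) (b := .inr (.inl ⟨0, n.succ_pos⟩))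
    (by simp [onionGraph, SimpleGraph.fromRel_adj]) nofun nofun onionGraph_adj_parent_or_eq

end Onion

/-- for `1 < p ≤ q`, the onion graph
`On(⌊(q-p)/2⌋, 2p-3, ⌈(q-p)/2⌉)` is bipartite and unicyclic with parts of
sizes `p` and `q`. -/
theorem onion_hasBipartition_isUnicyclic (p q : ℕ) (hp : 1 < p) (hpq : p ≤ q) :
    hasBipartition (onionGraph ((q - p) / 2) (2 * p - 3) ((q - p + 1) / 2)) p q ∧
    IsUnicyclic (onionGraph ((q - p) / 2) (2 * p - 3) ((q - p + 1) / 2)) := by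
  have hcard : Fintype.card (Fin 3 ⊕ Fin (2 * p - 3) ⊕ Fin ((q - p) / 2) ⊕ Fin ((q - p + 1) / 2))
      = p + q := by
    simp only [Fintype.card_sum, Fintype.card_fin]
    omega
  refine ⟨hasBipartition_of_adj_ne onionSide (onionSide_ne_of_adj (by omega))
    (card_onionSide.trans (by omega)) hcard.symm, ?_⟩
  obtain ⟨n, hn⟩ : ∃ n, 2 * p - 3 = n + 1 := ⟨2 * p - 4, by omega⟩
  rw [hn]
  exact onionGraph_succ_isUnicyclic
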